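/- The oracle doubly robust estimator is unbiased: (i) v₁(π₁,π₂) = Σ_s P_I(s) V₁(s), and (ii) Σ_τ p_{πᵇ}(τ) · Σ_{t=1}^T γ^{t−1} ( ρ_t(τ)·(R(s_t,a_t¹,a_t²) − Q_t(s_t,a_t¹,a_t²)) + ρ_{t−1}(τ)·V_t(s_t) ) = v₁(π₁,π₂). -/
import Mathlib


open Finset

noncomputable section
namespace TZMG

variable {S A₁ A₂ : Type*}

/-- Probability of a trajectory `τ = (s₁,a₁¹,a₁²,…,s_T,a_T¹,a_T²)` (0-indexed:
step `t` of the paper is index `t-1`) under the profile `(σ₁, σ₂)`: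
`P_I(s₁) · ∏_{t=1}^T σ₁(a_t¹|s_t)σ₂(a_t²|s_t) · ∏_{t=1}^{T−1} P_T(s_{t+1}|s_t,a_t¹,a_t²)`. -/
def trajProb {T : ℕ} [NeZero T] (PI : S → ℝ) (PT : S → A₁ → A₂ → S → ℝ)
    (σ₁ : ℕ → S → A₁ → ℝ) (σ₂ : ℕ → S → A₂ → ℝ)
    (τ : Fin T → S × A₁ × A₂) : ℝ :=
  PI (τ 0).1 *
    (∏ k : Fin T, σ₁ k (τ k).1 (τ k).2.1 * σ₂ k (τ k).1 (τ k).2.2) *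
    ∏ k : Fin T,
      if h : (k : ℕ) + 1 < T then PT (τ k).1 (τ k).2.1 (τ k).2.2 (τ ⟨k + 1, h⟩).1
      else 1

/-- The marginal state-action distribution `p^σ` of the profile `(σ₁, σ₂)`, 0-indexed:
`marg PI PT σ₁ σ₂ k` is the paper's `p^σ_{k+1}`, defined recursively by
`p^σ_1(s,a,b) = σ₁(a|s)σ₂(b|s)P_I(s)` and
`p^σ_{t}(s,a,b) = σ₁(a|s)σ₂(b|s)·Σ_{s',a',b'} P_T(s|s',a',b') p^σ_{t−1}(s',a',b')`. -/
def marg [Fintype S] [Fintype A₁] [Fintype A₂]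
    (PI : S → ℝ) (PT : S → A₁ → A₂ → S → ℝ)
    (σ₁ : ℕ → S → A₁ → ℝ) (σ₂ : ℕ → S → A₂ → ℝ) : ℕ → S → A₁ → A₂ → ℝ
  | 0, s, a, b => σ₁ 0 s a * σ₂ 0 s b * PI s
  | (k + 1), s, a, b => σ₁ (k + 1) s a * σ₂ (k + 1) s b *
      ∑ s' : S, ∑ a' : A₁, ∑ b' : A₂, PT s' a' b' s * marg PI PT σ₁ σ₂ k s' a' b'

/-- The `T`-step discounted value of the profile `(σ₁, σ₂)`:
`v₁(σ₁,σ₂) = Σ_τ p_σ(τ) Σ_{t=1}^T γ^{t−1} R(s_t,a_t¹,a_t²)`. -/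
def value [Fintype S] [Fintype A₁] [Fintype A₂] (T : ℕ) [NeZero T]
    (PI : S → ℝ) (PT : S → A₁ → A₂ → S → ℝ) (R : S → A₁ → A₂ → ℝ) (γ : ℝ)
    (σ₁ : ℕ → S → A₁ → ℝ) (σ₂ : ℕ → S → A₂ → ℝ) : ℝ :=
  ∑ τ : Fin T → S × A₁ × A₂, trajProb PI PT σ₁ σ₂ τ *
    ∑ k : Fin T, γ ^ (k : ℕ) * R (τ k).1 (τ k).2.1 (τ k).2.2

/-- The cumulative density ratio `ρ_t(τ) = ∏_{k=1}^t π(a_k|s_k)/πᵇ(a_k|s_k)`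
(so `cumRatio … τ 0 = ρ₀ = 1`); `t` is the paper's 1-based step count. -/
def cumRatio {T : ℕ} (πb₁ π₁ : ℕ → S → A₁ → ℝ) (πb₂ π₂ : ℕ → S → A₂ → ℝ)
    (τ : Fin T → S × A₁ × A₂) (t : ℕ) : ℝ :=
  ∏ j : Fin T,
    if (j : ℕ) < t then
      (π₁ j (τ j).1 (τ j).2.1 * π₂ j (τ j).1 (τ j).2.2) /
        (πb₁ j (τ j).1 (τ j).2.1 * πb₂ j (τ j).1 (τ j).2.2)
    else 1

/-- Backward recursion for the target profile's true state values:
`Vaux PT R γ π₁ π₂ T m` is the paper's `V_{T+1−m}` (so `Vaux … 0 = V_{T+1} = 0`),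
defined by `V_t(s) = Σ_{a,b} π₁(a|s)π₂(b|s)(R(s,a,b) + γ Σ_{s'} P_T(s'|s,a,b)V_{t+1}(s'))`. -/
def Vaux [Fintype S] [Fintype A₁] [Fintype A₂]
    (PT : S → A₁ → A₂ → S → ℝ) (R : S → A₁ → A₂ → ℝ) (γ : ℝ)
    (π₁ : ℕ → S → A₁ → ℝ) (π₂ : ℕ → S → A₂ → ℝ) (T : ℕ) : ℕ → S → ℝ
  | 0, _ => 0
  | (m + 1), s => ∑ a : A₁, ∑ b : A₂,
      π₁ (T - (m + 1)) s a * π₂ (T - (m + 1)) s b *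
        (R s a b + γ * ∑ s' : S, PT s a b s' * Vaux PT R γ π₁ π₂ T m s')

/-- The state value function `V` of the target profile, 0-indexed:
`Vfun … k` is the paper's `V_{k+1}`. -/
def Vfun [Fintype S] [Fintype A₁] [Fintype A₂]
    (PT : S → A₁ → A₂ → S → ℝ) (R : S → A₁ → A₂ → ℝ) (γ : ℝ)
    (π₁ : ℕ → S → A₁ → ℝ) (π₂ : ℕ → S → A₂ → ℝ) (T : ℕ) (k : ℕ) (s : S) : ℝ :=
  Vaux PT R γ π₁ π₂ T (T - k) s

/-- The state-action value function `Q` of the target profile, 0-indexed: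
`Qfun … k` is the paper's `Q_{k+1}`, with
`Q_t(s,a,b) = R(s,a,b) + γ Σ_{s'} P_T(s'|s,a,b) V_{t+1}(s')`. -/
def Qfun [Fintype S] [Fintype A₁] [Fintype A₂]
    (PT : S → A₁ → A₂ → S → ℝ) (R : S → A₁ → A₂ → ℝ) (γ : ℝ)
    (π₁ : ℕ → S → A₁ → ℝ) (π₂ : ℕ → S → A₂ → ℝ) (T : ℕ)
    (k : ℕ) (s : S) (a : A₁) (b : A₂) : ℝ :=
  R s a b + γ * ∑ s' : S, PT s a b s' * Vaux PT R γ π₁ π₂ T (T - k - 1) s'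

section Aux
variable {S A₁ A₂ : Type*} [Fintype S] [Fintype A₁] [Fintype A₂]
set_option linter.unusedSectionVars false
lemma sum_pi_succ {X : Type*} [Fintype X] (n : ℕ) (g : (Fin (n+1) → X) → ℝ) :
    ∑ τ : Fin (n+1) → X, g τ = ∑ x : X, ∑ τ : Fin n → X, g (Fin.cons x τ) := by
  rw [← (Fin.consEquiv (fun _ : Fin (n+1) => X)).sum_comp, Fintype.sum_prod_type]
  rfl

lemma dprod_eq (PT : S → A₁ → A₂ → S → ℝ) (T : ℕ) (f : Fin (T+1) → S × A₁ × A₂) :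
    (∏ k : Fin (T+1), if h : (k : ℕ) + 1 < T+1 then
        PT (f k).1 (f k).2.1 (f k).2.2 (f ⟨(k:ℕ) + 1, h⟩).1 else 1)
    = ∏ i : Fin T, PT (f i.castSucc).1 (f i.castSucc).2.1 (f i.castSucc).2.2 (f i.succ).1 := by
  rw [Fin.prod_univ_castSucc, dif_neg (by simp), mul_one]
  refine Finset.prod_congr rfl fun i _ => ?_
  rw [dif_pos (show ((i.castSucc : Fin (T+1)) : ℕ) + 1 < T + 1 by simpa using i.isLt)]
  rfl

lemma trajProb_one (PI : S → ℝ) (PT : S → A₁ → A₂ → S → ℝ) (σ₁ : ℕ → S → A₁ → ℝ)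
    (σ₂ : ℕ → S → A₂ → ℝ) (τ : Fin 1 → S × A₁ × A₂) :
    trajProb PI PT σ₁ σ₂ τ = PI (τ 0).1 * (σ₁ 0 (τ 0).1 (τ 0).2.1 * σ₂ 0 (τ 0).1 (τ 0).2.2) := by
  simp [trajProb]

lemma trajProb_cons (PI : S → ℝ) (PT : S → A₁ → A₂ → S → ℝ) (σ₁ : ℕ → S → A₁ → ℝ)
    (σ₂ : ℕ → S → A₂ → ℝ) (m : ℕ) (x : S × A₁ × A₂) (τ : Fin (m+1) → S × A₁ × A₂) :
    trajProb (T := m+2) PI PT σ₁ σ₂ (Fin.cons x τ) =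
      σ₁ 0 x.1 x.2.1 * σ₂ 0 x.1 x.2.2 * PI x.1 *
        trajProb (T := m+1) (PT x.1 x.2.1 x.2.2) PT
          (fun t => σ₁ (t+1)) (fun t => σ₂ (t+1)) τ := by
  unfold trajProb
  rw [dprod_eq, dprod_eq]
  simp only [Fin.prod_univ_succ, Fin.cons_succ, Fin.cons_zero, Fin.castSucc_zero,
    ← Fin.succ_castSucc, Fin.val_succ, Fin.val_zero, Fin.succ_zero_eq_one]
  ring

set_option linter.unusedSectionVars false

lemma sum_prod3 (f : S → A₁ → A₂ → ℝ) :
    ∑ x : S × A₁ × A₂, f x.1 x.2.1 x.2.2 = ∑ s : S, ∑ a : A₁, ∑ b : A₂, f s a b := by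
  rw [Fintype.sum_prod_type]
  exact Finset.sum_congr rfl fun s _ => Fintype.sum_prod_type _

lemma sum_policy_one (σ₁ : ℕ → S → A₁ → ℝ) (σ₂ : ℕ → S → A₂ → ℝ)
    (h1 : ∀ t s, ∑ a : A₁, σ₁ t s a = 1) (h2 : ∀ t s, ∑ b : A₂, σ₂ t s b = 1)
    (t : ℕ) (g : S → ℝ) :
    ∑ x : S × A₁ × A₂, σ₁ t x.1 x.2.1 * σ₂ t x.1 x.2.2 * g x.1 = ∑ s : S, g s := by
  rw [sum_prod3 (fun s a b => σ₁ t s a * σ₂ t s b * g s)]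
  refine Finset.sum_congr rfl fun s _ => ?_
  simp only [← Finset.sum_mul, ← Finset.mul_sum]
  rw [h1 t s, h2 t s]; ring

lemma sum_fin0 {X : Type*} [Fintype X] (c : ℝ) : ∑ _τ : Fin 0 → X, c = c :=
  Fintype.sum_unique _

lemma norm (PT : S → A₁ → A₂ → S → ℝ) (hPT1 : ∀ s a b, ∑ s' : S, PT s a b s' = 1) :
    ∀ (m : ℕ) (PI : S → ℝ), (∑ s : S, PI s) = 1 →
    ∀ (σ₁ : ℕ → S → A₁ → ℝ) (σ₂ : ℕ → S → A₂ → ℝ),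
      (∀ t s, ∑ a : A₁, σ₁ t s a = 1) → (∀ t s, ∑ b : A₂, σ₂ t s b = 1) →
      ∑ τ : Fin (m+1) → S × A₁ × A₂, trajProb PI PT σ₁ σ₂ τ = 1 := by
  intro m
  induction m with
  | zero =>
    intro PI hPI σ₁ σ₂ h1 h2
    rw [sum_pi_succ]
    simp only [trajProb_one, Fin.cons_zero, sum_fin0]
    calc ∑ x : S × A₁ × A₂, PI x.1 * (σ₁ 0 x.1 x.2.1 * σ₂ 0 x.1 x.2.2)
        = ∑ x : S × A₁ × A₂, σ₁ 0 x.1 x.2.1 * σ₂ 0 x.1 x.2.2 * PI x.1 := by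
          exact Finset.sum_congr rfl fun x _ => by ring
      _ = ∑ s : S, PI s := sum_policy_one σ₁ σ₂ h1 h2 0 PI
      _ = 1 := hPI
  | succ m ih =>
    intro PI hPI σ₁ σ₂ h1 h2
    rw [sum_pi_succ]
    calc ∑ x : S × A₁ × A₂, ∑ τ : Fin (m+1) → S × A₁ × A₂,
            trajProb PI PT σ₁ σ₂ (Fin.cons x τ)
        = ∑ x : S × A₁ × A₂, σ₁ 0 x.1 x.2.1 * σ₂ 0 x.1 x.2.2 * PI x.1 := by
          refine Finset.sum_congr rfl fun x _ => ?_
          simp only [trajProb_cons]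
          rw [← Finset.mul_sum, ih (PT x.1 x.2.1 x.2.2) (hPT1 _ _ _)
            (fun t => σ₁ (t+1)) (fun t => σ₂ (t+1)) (fun t s => h1 (t+1) s)
            (fun t s => h2 (t+1) s), mul_one]
      _ = ∑ s : S, PI s := sum_policy_one σ₁ σ₂ h1 h2 0 PI
      _ = 1 := hPI

lemma sum_swap4 {X : Type*} [Fintype X] (f : S → A₁ → A₂ → X → ℝ) :
    ∑ s' : S, ∑ a' : A₁, ∑ b' : A₂, ∑ x : X, f s' a' b' x
      = ∑ x : X, ∑ s' : S, ∑ a' : A₁, ∑ b' : A₂, f s' a' b' x := by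
  conv_lhs => enter [2, s', 2, a']; rw [Finset.sum_comm]
  conv_lhs => enter [2, s']; rw [Finset.sum_comm]
  rw [Finset.sum_comm]

lemma sum3_congr {f g : S → A₁ → A₂ → ℝ} (h : ∀ s a b, f s a b = g s a b) :
    (∑ s : S, ∑ a : A₁, ∑ b : A₂, f s a b) = ∑ s : S, ∑ a : A₁, ∑ b : A₂, g s a b :=
  Finset.sum_congr rfl fun s _ => Finset.sum_congr rfl fun a _ =>
    Finset.sum_congr rfl fun b _ => h s a b

lemma marg_shift (PT : S → A₁ → A₂ → S → ℝ) :
    ∀ (j : ℕ) (PI : S → ℝ) (σ₁ : ℕ → S → A₁ → ℝ) (σ₂ : ℕ → S → A₂ → ℝ) (s : S) (a : A₁) (b : A₂),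
    marg PI PT σ₁ σ₂ (j+1) s a b =
      ∑ x : S × A₁ × A₂, σ₁ 0 x.1 x.2.1 * σ₂ 0 x.1 x.2.2 * PI x.1 *
        marg (PT x.1 x.2.1 x.2.2) PT (fun t => σ₁ (t+1)) (fun t => σ₂ (t+1)) j s a b := by
  intro j
  induction j with
  | zero =>
    intro PI σ₁ σ₂ s a b
    show σ₁ 1 s a * σ₂ 1 s b * ∑ s' : S, ∑ a' : A₁, ∑ b' : A₂,
        PT s' a' b' s * (σ₁ 0 s' a' * σ₂ 0 s' b' * PI s') = _
    rw [show (∑ x : S × A₁ × A₂, σ₁ 0 x.1 x.2.1 * σ₂ 0 x.1 x.2.2 * PI x.1 *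
        marg (PT x.1 x.2.1 x.2.2) PT (fun t => σ₁ (t+1)) (fun t => σ₂ (t+1)) 0 s a b)
      = ∑ s' : S, ∑ a' : A₁, ∑ b' : A₂, σ₁ 0 s' a' * σ₂ 0 s' b' * PI s' *
          (σ₁ 1 s a * σ₂ 1 s b * PT s' a' b' s) from
      sum_prod3 (fun s' a' b' => σ₁ 0 s' a' * σ₂ 0 s' b' * PI s' *
        (σ₁ 1 s a * σ₂ 1 s b * PT s' a' b' s))]
    simp only [Finset.mul_sum]
    exact sum3_congr fun s' a' b' => by ring
  | succ j ih =>
    intro PI σ₁ σ₂ s a b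
    show σ₁ (j+2) s a * σ₂ (j+2) s b * ∑ s' : S, ∑ a' : A₁, ∑ b' : A₂,
        PT s' a' b' s * marg PI PT σ₁ σ₂ (j+1) s' a' b' = _
    have expand : ∀ s' a' b', PT s' a' b' s * marg PI PT σ₁ σ₂ (j+1) s' a' b'
        = ∑ x : S × A₁ × A₂, σ₁ 0 x.1 x.2.1 * σ₂ 0 x.1 x.2.2 * PI x.1 *
            (PT s' a' b' s *
              marg (PT x.1 x.2.1 x.2.2) PT (fun t => σ₁ (t+1)) (fun t => σ₂ (t+1)) j s' a' b') := by
      intro s' a' b'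
      rw [ih, Finset.mul_sum]
      exact Finset.sum_congr rfl fun x _ => by ring
    calc σ₁ (j+2) s a * σ₂ (j+2) s b * ∑ s' : S, ∑ a' : A₁, ∑ b' : A₂,
          PT s' a' b' s * marg PI PT σ₁ σ₂ (j+1) s' a' b'
        = ∑ x : S × A₁ × A₂, ∑ s' : S, ∑ a' : A₁, ∑ b' : A₂,
            σ₁ (j+2) s a * σ₂ (j+2) s b *
            (σ₁ 0 x.1 x.2.1 * σ₂ 0 x.1 x.2.2 * PI x.1 *
              (PT s' a' b' s *
                marg (PT x.1 x.2.1 x.2.2) PT (fun t => σ₁ (t+1)) (fun t => σ₂ (t+1)) j s' a' b')) := by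
          simp only [expand, Finset.mul_sum]
          exact sum_swap4 _
      _ = ∑ x : S × A₁ × A₂, σ₁ 0 x.1 x.2.1 * σ₂ 0 x.1 x.2.2 * PI x.1 *
            marg (PT x.1 x.2.1 x.2.2) PT (fun t => σ₁ (t+1)) (fun t => σ₂ (t+1)) (j+1) s a b := by
          refine Finset.sum_congr rfl fun x _ => ?_
          show _ = _ * (σ₁ (j+2) s a * σ₂ (j+2) s b * ∑ s' : S, ∑ a' : A₁, ∑ b' : A₂,
            PT s' a' b' s *
              marg (PT x.1 x.2.1 x.2.2) PT (fun t => σ₁ (t+1)) (fun t => σ₂ (t+1)) j s' a' b')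
          simp only [Finset.mul_sum]
          exact sum3_congr fun s' a' b' => by ring

lemma master (PT : S → A₁ → A₂ → S → ℝ) (hPT1 : ∀ s a b, ∑ s' : S, PT s a b s' = 1) :
    ∀ (m : ℕ) (PI : S → ℝ) (σ₁ : ℕ → S → A₁ → ℝ) (σ₂ : ℕ → S → A₂ → ℝ),
      (∀ t s, ∑ a : A₁, σ₁ t s a = 1) → (∀ t s, ∑ b : A₂, σ₂ t s b = 1) →
      ∀ (k : ℕ) (hk : k < m + 1) (F : S → A₁ → A₂ → ℝ),
      ∑ τ : Fin (m+1) → S × A₁ × A₂, trajProb PI PT σ₁ σ₂ τ *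
          F (τ ⟨k, hk⟩).1 (τ ⟨k, hk⟩).2.1 (τ ⟨k, hk⟩).2.2
        = ∑ s : S, ∑ a : A₁, ∑ b : A₂, marg PI PT σ₁ σ₂ k s a b * F s a b := by
  intro m
  induction m with
  | zero =>
    intro PI σ₁ σ₂ h1 h2 k hk F
    obtain rfl : k = 0 := by omega
    rw [sum_pi_succ]
    simp only [trajProb_one, Fin.cons_zero, sum_fin0, Fin.mk_zero]
    rw [show (∑ x : S × A₁ × A₂, PI x.1 * (σ₁ 0 x.1 x.2.1 * σ₂ 0 x.1 x.2.2) *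
          F x.1 x.2.1 x.2.2)
        = ∑ s : S, ∑ a : A₁, ∑ b : A₂, PI s * (σ₁ 0 s a * σ₂ 0 s b) * F s a b from
      sum_prod3 (fun s a b => PI s * (σ₁ 0 s a * σ₂ 0 s b) * F s a b)]
    exact sum3_congr fun s a b => by show _ = σ₁ 0 s a * σ₂ 0 s b * PI s * F s a b; ring
  | succ m ih =>
    intro PI σ₁ σ₂ h1 h2 k hk F
    match k, hk with
    | 0, hk =>
      rw [sum_pi_succ]
      simp only [Fin.mk_zero, Fin.cons_zero, trajProb_cons]
      calc ∑ x : S × A₁ × A₂, ∑ τ : Fin (m+1) → S × A₁ × A₂,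
            σ₁ 0 x.1 x.2.1 * σ₂ 0 x.1 x.2.2 * PI x.1 *
              trajProb (PT x.1 x.2.1 x.2.2) PT (fun t => σ₁ (t+1)) (fun t => σ₂ (t+1)) τ *
              F x.1 x.2.1 x.2.2
          = ∑ x : S × A₁ × A₂, σ₁ 0 x.1 x.2.1 * σ₂ 0 x.1 x.2.2 * PI x.1 * F x.1 x.2.1 x.2.2 := by
            refine Finset.sum_congr rfl fun x _ => ?_
            calc ∑ τ : Fin (m+1) → S × A₁ × A₂,
                  σ₁ 0 x.1 x.2.1 * σ₂ 0 x.1 x.2.2 * PI x.1 *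
                    trajProb (PT x.1 x.2.1 x.2.2) PT (fun t => σ₁ (t+1)) (fun t => σ₂ (t+1)) τ *
                    F x.1 x.2.1 x.2.2
                = σ₁ 0 x.1 x.2.1 * σ₂ 0 x.1 x.2.2 * PI x.1 * F x.1 x.2.1 x.2.2 *
                    ∑ τ : Fin (m+1) → S × A₁ × A₂,
                      trajProb (PT x.1 x.2.1 x.2.2) PT (fun t => σ₁ (t+1)) (fun t => σ₂ (t+1)) τ := by
                  rw [Finset.mul_sum]
                  exact Finset.sum_congr rfl fun τ _ => by ring
              _ = σ₁ 0 x.1 x.2.1 * σ₂ 0 x.1 x.2.2 * PI x.1 * F x.1 x.2.1 x.2.2 := by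
                  rw [norm PT hPT1 m (PT x.1 x.2.1 x.2.2) (hPT1 _ _ _)
                    (fun t => σ₁ (t+1)) (fun t => σ₂ (t+1)) (fun t s => h1 (t+1) s)
                    (fun t s => h2 (t+1) s), mul_one]
        _ = ∑ s : S, ∑ a : A₁, ∑ b : A₂, marg PI PT σ₁ σ₂ 0 s a b * F s a b := by
            rw [show (∑ x : S × A₁ × A₂,
                σ₁ 0 x.1 x.2.1 * σ₂ 0 x.1 x.2.2 * PI x.1 * F x.1 x.2.1 x.2.2)
              = ∑ s : S, ∑ a : A₁, ∑ b : A₂, σ₁ 0 s a * σ₂ 0 s b * PI s * F s a b from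
              sum_prod3 (fun s a b => σ₁ 0 s a * σ₂ 0 s b * PI s * F s a b)]
            exact sum3_congr fun s a b => rfl
    | (j+1), hk =>
      have hj : j < m + 1 := by omega
      rw [sum_pi_succ]
      have hcons : ∀ (x : S × A₁ × A₂) (τ : Fin (m+1) → S × A₁ × A₂),
          (Fin.cons x τ : Fin (m+2) → S × A₁ × A₂) ⟨j+1, hk⟩ = τ ⟨j, hj⟩ :=
        fun x τ => by exact @Fin.cons_succ (m+1) (fun _ => S × A₁ × A₂) x τ ⟨j, hj⟩
      simp only [hcons, trajProb_cons]
      calc ∑ x : S × A₁ × A₂, ∑ τ : Fin (m+1) → S × A₁ × A₂,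
            σ₁ 0 x.1 x.2.1 * σ₂ 0 x.1 x.2.2 * PI x.1 *
              trajProb (PT x.1 x.2.1 x.2.2) PT (fun t => σ₁ (t+1)) (fun t => σ₂ (t+1)) τ *
              F (τ ⟨j, hj⟩).1 (τ ⟨j, hj⟩).2.1 (τ ⟨j, hj⟩).2.2
          = ∑ x : S × A₁ × A₂, σ₁ 0 x.1 x.2.1 * σ₂ 0 x.1 x.2.2 * PI x.1 *
              ∑ s : S, ∑ a : A₁, ∑ b : A₂,
                marg (PT x.1 x.2.1 x.2.2) PT (fun t => σ₁ (t+1)) (fun t => σ₂ (t+1)) j s a b *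
                  F s a b := by
            refine Finset.sum_congr rfl fun x _ => ?_
            rw [← ih (PT x.1 x.2.1 x.2.2) (fun t => σ₁ (t+1)) (fun t => σ₂ (t+1))
              (fun t s => h1 (t+1) s) (fun t s => h2 (t+1) s) j hj F, Finset.mul_sum]
            exact Finset.sum_congr rfl fun τ _ => by ring
        _ = ∑ s : S, ∑ a : A₁, ∑ b : A₂, marg PI PT σ₁ σ₂ (j+1) s a b * F s a b := by
            rw [show (∑ x : S × A₁ × A₂, σ₁ 0 x.1 x.2.1 * σ₂ 0 x.1 x.2.2 * PI x.1 *
                ∑ s : S, ∑ a : A₁, ∑ b : A₂,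
                  marg (PT x.1 x.2.1 x.2.2) PT (fun t => σ₁ (t+1)) (fun t => σ₂ (t+1)) j s a b *
                    F s a b)
              = ∑ x : S × A₁ × A₂, ∑ s : S, ∑ a : A₁, ∑ b : A₂,
                  σ₁ 0 x.1 x.2.1 * σ₂ 0 x.1 x.2.2 * PI x.1 *
                    marg (PT x.1 x.2.1 x.2.2) PT (fun t => σ₁ (t+1)) (fun t => σ₂ (t+1)) j s a b *
                      F s a b from Finset.sum_congr rfl fun x _ => by
                rw [Finset.mul_sum]
                refine Finset.sum_congr rfl fun s _ => ?_
                rw [Finset.mul_sum]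
                refine Finset.sum_congr rfl fun a _ => ?_
                rw [Finset.mul_sum]
                exact Finset.sum_congr rfl fun b _ => by ring]
            rw [← sum_swap4 (fun s a b (x : S × A₁ × A₂) =>
              σ₁ 0 x.1 x.2.1 * σ₂ 0 x.1 x.2.2 * PI x.1 *
                marg (PT x.1 x.2.1 x.2.2) PT (fun t => σ₁ (t+1)) (fun t => σ₂ (t+1)) j s a b *
                  F s a b)]
            refine sum3_congr fun s a b => ?_
            rw [marg_shift, Finset.sum_mul]

lemma ratio_cancel {T : ℕ} [NeZero T] (PI : S → ℝ) (PT : S → A₁ → A₂ → S → ℝ)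
    (π₁ πb₁ : ℕ → S → A₁ → ℝ) (π₂ πb₂ : ℕ → S → A₂ → ℝ)
    (hb₁ : ∀ t s a, πb₁ t s a ≠ 0) (hb₂ : ∀ t s b, πb₂ t s b ≠ 0)
    (τ : Fin T → S × A₁ × A₂) (t : ℕ) :
    trajProb PI PT πb₁ πb₂ τ * cumRatio πb₁ π₁ πb₂ π₂ τ t =
      trajProb PI PT (fun j s a => if j < t then π₁ j s a else πb₁ j s a)
        (fun j s b => if j < t then π₂ j s b else πb₂ j s b) τ := by
  unfold trajProb cumRatio
  have key : (∏ k : Fin T, πb₁ k (τ k).1 (τ k).2.1 * πb₂ k (τ k).1 (τ k).2.2) *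
      (∏ j : Fin T, if (j : ℕ) < t then
          (π₁ j (τ j).1 (τ j).2.1 * π₂ j (τ j).1 (τ j).2.2) /
            (πb₁ j (τ j).1 (τ j).2.1 * πb₂ j (τ j).1 (τ j).2.2)
        else 1)
      = ∏ k : Fin T, (if (k : ℕ) < t then π₁ k (τ k).1 (τ k).2.1 else πb₁ k (τ k).1 (τ k).2.1) *
          (if (k : ℕ) < t then π₂ k (τ k).1 (τ k).2.2 else πb₂ k (τ k).1 (τ k).2.2) := by
    rw [← Finset.prod_mul_distrib]
    refine Finset.prod_congr rfl fun k _ => ?_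
    by_cases h : (k : ℕ) < t
    · simp only [if_pos h]
      rw [mul_comm, div_mul_cancel₀]
      exact mul_ne_zero (hb₁ _ _ _) (hb₂ _ _ _)
    · simp only [if_neg h, mul_one]
  calc PI (τ 0).1 * (∏ k : Fin T, πb₁ k (τ k).1 (τ k).2.1 * πb₂ k (τ k).1 (τ k).2.2) *
        (∏ k : Fin T, if h : (k : ℕ) + 1 < T then
            PT (τ k).1 (τ k).2.1 (τ k).2.2 (τ ⟨(k:ℕ) + 1, h⟩).1 else 1) *
        (∏ j : Fin T, if (j : ℕ) < t then
            (π₁ j (τ j).1 (τ j).2.1 * π₂ j (τ j).1 (τ j).2.2) /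
              (πb₁ j (τ j).1 (τ j).2.1 * πb₂ j (τ j).1 (τ j).2.2)
          else 1)
      = PI (τ 0).1 * ((∏ k : Fin T, πb₁ k (τ k).1 (τ k).2.1 * πb₂ k (τ k).1 (τ k).2.2) *
          (∏ j : Fin T, if (j : ℕ) < t then
              (π₁ j (τ j).1 (τ j).2.1 * π₂ j (τ j).1 (τ j).2.2) /
                (πb₁ j (τ j).1 (τ j).2.1 * πb₂ j (τ j).1 (τ j).2.2)
            else 1)) *
          (∏ k : Fin T, if h : (k : ℕ) + 1 < T then
            PT (τ k).1 (τ k).2.1 (τ k).2.2 (τ ⟨(k:ℕ) + 1, h⟩).1 else 1) := by ring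
    _ = _ := by rw [key]

lemma marg_congr (PI : S → ℝ) (PT : S → A₁ → A₂ → S → ℝ) :
    ∀ (k : ℕ) (σ₁ σ₁' : ℕ → S → A₁ → ℝ) (σ₂ σ₂' : ℕ → S → A₂ → ℝ),
      (∀ j, j ≤ k → σ₁ j = σ₁' j) → (∀ j, j ≤ k → σ₂ j = σ₂' j) →
      marg PI PT σ₁ σ₂ k = marg PI PT σ₁' σ₂' k := by
  intro k
  induction k with
  | zero =>
    intro σ₁ σ₁' σ₂ σ₂' h1 h2
    funext s a b
    show σ₁ 0 s a * σ₂ 0 s b * PI s = σ₁' 0 s a * σ₂' 0 s b * PI s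
    rw [h1 0 le_rfl, h2 0 le_rfl]
  | succ k ih =>
    intro σ₁ σ₁' σ₂ σ₂' h1 h2
    funext s a b
    show σ₁ (k+1) s a * σ₂ (k+1) s b * _ = σ₁' (k+1) s a * σ₂' (k+1) s b * _
    rw [h1 (k+1) le_rfl, h2 (k+1) le_rfl,
      ih σ₁ σ₁' σ₂ σ₂' (fun j hj => h1 j (hj.trans (Nat.le_succ k)))
        (fun j hj => h2 j (hj.trans (Nat.le_succ k)))]

def margC (PI : S → ℝ) (PT : S → A₁ → A₂ → S → ℝ)
    (σ₁ : ℕ → S → A₁ → ℝ) (σ₂ : ℕ → S → A₂ → ℝ) : ℕ → S → ℝ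
  | 0, s => PI s
  | (k+1), s => ∑ s' : S, ∑ a' : A₁, ∑ b' : A₂, PT s' a' b' s * marg PI PT σ₁ σ₂ k s' a' b'

lemma marg_factor (PI : S → ℝ) (PT : S → A₁ → A₂ → S → ℝ)
    (σ₁ : ℕ → S → A₁ → ℝ) (σ₂ : ℕ → S → A₂ → ℝ) (k : ℕ) (s : S) (a : A₁) (b : A₂) :
    marg PI PT σ₁ σ₂ k s a b = σ₁ k s a * σ₂ k s b * margC PI PT σ₁ σ₂ k s := by
  cases k <;> rfl

lemma sum_ab_marg (PI : S → ℝ) (PT : S → A₁ → A₂ → S → ℝ)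
    (σ₁ : ℕ → S → A₁ → ℝ) (σ₂ : ℕ → S → A₂ → ℝ) (k : ℕ) (s : S)
    (h1 : ∑ a : A₁, σ₁ k s a = 1) (h2 : ∑ b : A₂, σ₂ k s b = 1) (c : ℝ) :
    ∑ a : A₁, ∑ b : A₂, marg PI PT σ₁ σ₂ k s a b * c = margC PI PT σ₁ σ₂ k s * c := by
  simp only [marg_factor]
  calc ∑ a : A₁, ∑ b : A₂, σ₁ k s a * σ₂ k s b * margC PI PT σ₁ σ₂ k s * c
      = ∑ a : A₁, σ₁ k s a * ((∑ b : A₂, σ₂ k s b) * (margC PI PT σ₁ σ₂ k s * c)) := by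
        refine Finset.sum_congr rfl fun a _ => ?_
        simp only [Finset.sum_mul, Finset.mul_sum]
        exact Finset.sum_congr rfl fun b _ => by ring
    _ = margC PI PT σ₁ σ₂ k s * c := by
        rw [h2, ← Finset.sum_mul, h1]; ring

lemma sum3_add (f g : S → A₁ → A₂ → ℝ) :
    (∑ s : S, ∑ a : A₁, ∑ b : A₂, (f s a b + g s a b))
      = (∑ s : S, ∑ a : A₁, ∑ b : A₂, f s a b) + ∑ s : S, ∑ a : A₁, ∑ b : A₂, g s a b := by
  simp [Finset.sum_add_distrib]

lemma QV (PT : S → A₁ → A₂ → S → ℝ) (R : S → A₁ → A₂ → ℝ) (γ : ℝ)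
    (π₁ : ℕ → S → A₁ → ℝ) (π₂ : ℕ → S → A₂ → ℝ) (T k : ℕ) (hk : k < T) (s : S) :
    ∑ a : A₁, ∑ b : A₂, π₁ k s a * π₂ k s b *
        (R s a b + γ * ∑ s' : S, PT s a b s' * Vaux PT R γ π₁ π₂ T (T - k - 1) s')
      = Vaux PT R γ π₁ π₂ T (T - k) s := by
  have h1 : T - k = (T - k - 1) + 1 := by omega
  conv_rhs => rw [h1]
  show _ = ∑ a : A₁, ∑ b : A₂, π₁ (T - (T - k - 1 + 1)) s a * π₂ (T - (T - k - 1 + 1)) s b *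
    (R s a b + γ * ∑ s' : S, PT s a b s' * Vaux PT R γ π₁ π₂ T (T - k - 1) s')
  rw [show T - (T - k - 1 + 1) = k from by omega]

lemma tele (PI : S → ℝ) (PT : S → A₁ → A₂ → S → ℝ) (R : S → A₁ → A₂ → ℝ) (γ : ℝ)
    (π₁ : ℕ → S → A₁ → ℝ) (π₂ : ℕ → S → A₂ → ℝ)
    (hπ₁1 : ∀ t s, ∑ a : A₁, π₁ t s a = 1) (hπ₂1 : ∀ t s, ∑ b : A₂, π₂ t s b = 1)
    (T : ℕ) :
    ∀ (d k : ℕ), k + d = T →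
    ∑ s : S, margC PI PT π₁ π₂ k s * Vaux PT R γ π₁ π₂ T d s
      = ∑ i ∈ Finset.range d, γ ^ i *
          ∑ s : S, ∑ a : A₁, ∑ b : A₂, marg PI PT π₁ π₂ (k + i) s a b * R s a b := by
  intro d
  induction d with
  | zero => intro k hk; simp [Vaux]
  | succ d ih =>
    intro k hk
    have hTd : T - (d+1) = k := by omega
    have hexp : ∑ s : S, margC PI PT π₁ π₂ k s * Vaux PT R γ π₁ π₂ T (d+1) s
        = ∑ s : S, ∑ a : A₁, ∑ b : A₂, (marg PI PT π₁ π₂ k s a b * R s a b +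
            γ * ∑ s' : S, PT s a b s' * marg PI PT π₁ π₂ k s a b *
              Vaux PT R γ π₁ π₂ T d s') := by
      refine Finset.sum_congr rfl fun s _ => ?_
      show margC PI PT π₁ π₂ k s * (∑ a : A₁, ∑ b : A₂,
          π₁ (T - (d+1)) s a * π₂ (T - (d+1)) s b *
            (R s a b + γ * ∑ s' : S, PT s a b s' * Vaux PT R γ π₁ π₂ T d s')) = _
      rw [hTd, Finset.mul_sum]
      refine Finset.sum_congr rfl fun a _ => ?_
      rw [Finset.mul_sum]
      refine Finset.sum_congr rfl fun b _ => ?_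
      simp only [marg_factor]
      rw [show (∑ s' : S, PT s a b s' * (π₁ k s a * π₂ k s b * margC PI PT π₁ π₂ k s) *
            Vaux PT R γ π₁ π₂ T d s')
          = (π₁ k s a * π₂ k s b * margC PI PT π₁ π₂ k s) *
              ∑ s' : S, PT s a b s' * Vaux PT R γ π₁ π₂ T d s' from by
        rw [Finset.mul_sum]; exact Finset.sum_congr rfl fun s' _ => by ring]
      ring
    have hsecond : (∑ s : S, ∑ a : A₁, ∑ b : A₂,
          γ * ∑ s' : S, PT s a b s' * marg PI PT π₁ π₂ k s a b *
            Vaux PT R γ π₁ π₂ T d s')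
        = γ * ∑ s' : S, margC PI PT π₁ π₂ (k+1) s' * Vaux PT R γ π₁ π₂ T d s' := by
      simp only [← Finset.mul_sum]
      rw [sum_swap4 (fun s a b s' => PT s a b s' * marg PI PT π₁ π₂ k s a b *
        Vaux PT R γ π₁ π₂ T d s')]
      congr 1
      refine Finset.sum_congr rfl fun s' _ => ?_
      show _ = (∑ s'' : S, ∑ a' : A₁, ∑ b' : A₂, PT s'' a' b' s' * marg PI PT π₁ π₂ k s'' a' b')
        * Vaux PT R γ π₁ π₂ T d s'
      simp only [Finset.sum_mul]
    rw [hexp, sum3_add, hsecond, ih (k+1) (by omega), Finset.sum_range_succ']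
    simp only [pow_zero, one_mul, Nat.add_zero]
    rw [Finset.mul_sum]
    rw [add_comm]
    congr 1
    refine Finset.sum_congr rfl fun i _ => ?_
    rw [show k + 1 + i = k + (i + 1) from by omega]
    ring

lemma value_marg (m : ℕ) (PI : S → ℝ) (PT : S → A₁ → A₂ → S → ℝ)
    (hPT1 : ∀ s a b, ∑ s' : S, PT s a b s' = 1) (R : S → A₁ → A₂ → ℝ) (γ : ℝ)
    (σ₁ : ℕ → S → A₁ → ℝ) (σ₂ : ℕ → S → A₂ → ℝ)
    (h1 : ∀ t s, ∑ a : A₁, σ₁ t s a = 1) (h2 : ∀ t s, ∑ b : A₂, σ₂ t s b = 1) :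
    value (m+1) PI PT R γ σ₁ σ₂ = ∑ k : Fin (m+1), γ ^ (k : ℕ) *
      ∑ s : S, ∑ a : A₁, ∑ b : A₂, marg PI PT σ₁ σ₂ k s a b * R s a b := by
  unfold value
  calc ∑ τ : Fin (m+1) → S × A₁ × A₂, trajProb PI PT σ₁ σ₂ τ *
        ∑ k : Fin (m+1), γ ^ (k : ℕ) * R (τ k).1 (τ k).2.1 (τ k).2.2
      = ∑ k : Fin (m+1), ∑ τ : Fin (m+1) → S × A₁ × A₂, trajProb PI PT σ₁ σ₂ τ *
          (γ ^ (k : ℕ) * R (τ k).1 (τ k).2.1 (τ k).2.2) := by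
        simp only [Finset.mul_sum]
        rw [Finset.sum_comm]
    _ = ∑ k : Fin (m+1), γ ^ (k : ℕ) * ∑ τ : Fin (m+1) → S × A₁ × A₂,
          trajProb PI PT σ₁ σ₂ τ * R (τ k).1 (τ k).2.1 (τ k).2.2 := by
        refine Finset.sum_congr rfl fun k _ => ?_
        rw [Finset.mul_sum]
        exact Finset.sum_congr rfl fun τ _ => by ring
    _ = _ := by
        refine Finset.sum_congr rfl fun k _ => ?_
        congr 1
        exact master PT hPT1 m PI σ₁ σ₂ h1 h2 (k : ℕ) k.isLt R

lemma margC_congr (PI : S → ℝ) (PT : S → A₁ → A₂ → S → ℝ)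
    (k : ℕ) (σ₁ σ₁' : ℕ → S → A₁ → ℝ) (σ₂ σ₂' : ℕ → S → A₂ → ℝ)
    (h1 : ∀ j, j < k → σ₁ j = σ₁' j) (h2 : ∀ j, j < k → σ₂ j = σ₂' j) :
    margC PI PT σ₁ σ₂ k = margC PI PT σ₁' σ₂' k := by
  cases k with
  | zero => rfl
  | succ k =>
    funext s
    show (∑ s' : S, ∑ a' : A₁, ∑ b' : A₂, PT s' a' b' s * marg PI PT σ₁ σ₂ k s' a' b') = _
    rw [marg_congr PI PT k σ₁ σ₁' σ₂ σ₂' (fun j hj => h1 j (by omega))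
      (fun j hj => h2 j (by omega))]
    rfl

lemma ratio_master (PI : S → ℝ) (PT : S → A₁ → A₂ → S → ℝ)
    (hPT1 : ∀ s a b, ∑ s' : S, PT s a b s' = 1)
    (π₁ : ℕ → S → A₁ → ℝ) (hπ₁1 : ∀ t s, ∑ a : A₁, π₁ t s a = 1)
    (π₂ : ℕ → S → A₂ → ℝ) (hπ₂1 : ∀ t s, ∑ b : A₂, π₂ t s b = 1)
    (πb₁ : ℕ → S → A₁ → ℝ) (hπb₁0 : ∀ t s a, πb₁ t s a ≠ 0)
    (hπb₁1 : ∀ t s, ∑ a : A₁, πb₁ t s a = 1)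
    (πb₂ : ℕ → S → A₂ → ℝ) (hπb₂0 : ∀ t s b, πb₂ t s b ≠ 0)
    (hπb₂1 : ∀ t s, ∑ b : A₂, πb₂ t s b = 1)
    (m k : ℕ) (hk : k < m + 1) (t : ℕ) (F : S → A₁ → A₂ → ℝ) :
    ∑ τ : Fin (m+1) → S × A₁ × A₂, trajProb PI PT πb₁ πb₂ τ *
        (cumRatio πb₁ π₁ πb₂ π₂ τ t * F (τ ⟨k, hk⟩).1 (τ ⟨k, hk⟩).2.1 (τ ⟨k, hk⟩).2.2)
      = ∑ s : S, ∑ a : A₁, ∑ b : A₂,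
          marg PI PT (fun j s a => if j < t then π₁ j s a else πb₁ j s a)
            (fun j s b => if j < t then π₂ j s b else πb₂ j s b) k s a b * F s a b := by
  calc ∑ τ : Fin (m+1) → S × A₁ × A₂, trajProb PI PT πb₁ πb₂ τ *
        (cumRatio πb₁ π₁ πb₂ π₂ τ t * F (τ ⟨k, hk⟩).1 (τ ⟨k, hk⟩).2.1 (τ ⟨k, hk⟩).2.2)
      = ∑ τ : Fin (m+1) → S × A₁ × A₂,
          trajProb PI PT (fun j s a => if j < t then π₁ j s a else πb₁ j s a)
            (fun j s b => if j < t then π₂ j s b else πb₂ j s b) τ *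
            F (τ ⟨k, hk⟩).1 (τ ⟨k, hk⟩).2.1 (τ ⟨k, hk⟩).2.2 := by
        refine Finset.sum_congr rfl fun τ _ => ?_
        rw [← mul_assoc, ratio_cancel PI PT π₁ πb₁ π₂ πb₂ hπb₁0 hπb₂0 τ t]
    _ = _ := by
        refine master PT hPT1 m PI _ _ (fun j s => ?_) (fun j s => ?_) k hk F
        · by_cases h : j < t
          · simp only [if_pos h]; exact hπ₁1 j s
          · simp only [if_neg h]; exact hπb₁1 j s
        · by_cases h : j < t
          · simp only [if_pos h]; exact hπ₂1 j s
          · simp only [if_neg h]; exact hπb₂1 j s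

end Aux

end TZMG
end

open TZMG in
/-- Unbiasedness of the oracle doubly robust estimator:
(i) `v₁(π₁,π₂) = Σ_s P_I(s) V₁(s)`, and
(ii) `Σ_τ p_{πᵇ}(τ) Σ_{t=1}^T γ^{t−1}(ρ_t(τ)(R(s_t,a_t¹,a_t²) − Q_t(s_t,a_t¹,a_t²))
      + ρ_{t−1}(τ) V_t(s_t)) = v₁(π₁,π₂)`
(0-indexed: `t−1 = k`, `ρ_t = cumRatio … τ (k+1)`, `ρ_{t−1} = cumRatio … τ k`,
`Q_t = Qfun … k`, `V_t = Vfun … k`, and `V₁ = Vfun … 0`). -/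
theorem doubly_robust_unbiased
    {S A₁ A₂ : Type*} [Fintype S] [Fintype A₁] [Fintype A₂] [Nonempty S]
    [Nonempty A₁] [Nonempty A₂]
    (T : ℕ) [NeZero T] (γ : ℝ)
    (PI : S → ℝ) (hPI0 : ∀ s, 0 ≤ PI s) (hPI1 : ∑ s : S, PI s = 1)
    (PT : S → A₁ → A₂ → S → ℝ) (hPT0 : ∀ s a b s', 0 ≤ PT s a b s')
    (hPT1 : ∀ s a b, ∑ s' : S, PT s a b s' = 1)
    (R : S → A₁ → A₂ → ℝ)
    (π₁ : ℕ → S → A₁ → ℝ) (hπ₁0 : ∀ t s a, 0 ≤ π₁ t s a)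
    (hπ₁1 : ∀ t s, ∑ a : A₁, π₁ t s a = 1)
    (π₂ : ℕ → S → A₂ → ℝ) (hπ₂0 : ∀ t s b, 0 ≤ π₂ t s b)
    (hπ₂1 : ∀ t s, ∑ b : A₂, π₂ t s b = 1)
    (πb₁ : ℕ → S → A₁ → ℝ) (hπb₁0 : ∀ t s a, 0 < πb₁ t s a)
    (hπb₁1 : ∀ t s, ∑ a : A₁, πb₁ t s a = 1)
    (πb₂ : ℕ → S → A₂ → ℝ) (hπb₂0 : ∀ t s b, 0 < πb₂ t s b)
    (hπb₂1 : ∀ t s, ∑ b : A₂, πb₂ t s b = 1) :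
    value T PI PT R γ π₁ π₂ = (∑ s : S, PI s * Vfun PT R γ π₁ π₂ T 0 s) ∧
      (∑ τ : Fin T → S × A₁ × A₂, trajProb PI PT πb₁ πb₂ τ *
          ∑ k : Fin T, γ ^ (k : ℕ) *
            (cumRatio πb₁ π₁ πb₂ π₂ τ ((k : ℕ) + 1) *
                (R (τ k).1 (τ k).2.1 (τ k).2.2 -
                  Qfun PT R γ π₁ π₂ T k (τ k).1 (τ k).2.1 (τ k).2.2) +
              cumRatio πb₁ π₁ πb₂ π₂ τ (k : ℕ) * Vfun PT R γ π₁ π₂ T k (τ k).1)) =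
        value T PI PT R γ π₁ π₂ := by
  obtain ⟨m, rfl⟩ : ∃ m, T = m + 1 := ⟨T - 1, by have := Nat.pos_of_ne_zero (NeZero.ne T); omega⟩
  have hb1 : ∀ t s a, πb₁ t s a ≠ 0 := fun t s a => (hπb₁0 t s a).ne'
  have hb2 : ∀ t s b, πb₂ t s b ≠ 0 := fun t s b => (hπb₂0 t s b).ne'
  constructor
  · rw [value_marg m PI PT hPT1 R γ π₁ π₂ hπ₁1 hπ₂1]
    have ht := tele PI PT R γ π₁ π₂ hπ₁1 hπ₂1 (m+1) (m+1) 0 (by omega)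
    simp only [Nat.zero_add] at ht
    rw [Fin.sum_univ_eq_sum_range (fun i => γ ^ i *
      ∑ s : S, ∑ a : A₁, ∑ b : A₂, marg PI PT π₁ π₂ i s a b * R s a b) (m+1), ← ht]
    refine Finset.sum_congr rfl fun s _ => ?_
    show margC PI PT π₁ π₂ 0 s * Vaux PT R γ π₁ π₂ (m+1) (m+1) s = _
    rw [show margC PI PT π₁ π₂ 0 s = PI s from rfl, Vfun, Nat.sub_zero]
  · calc ∑ τ : Fin (m+1) → S × A₁ × A₂, trajProb PI PT πb₁ πb₂ τ *
          ∑ k : Fin (m+1), γ ^ (k : ℕ) *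
            (cumRatio πb₁ π₁ πb₂ π₂ τ ((k : ℕ) + 1) *
                (R (τ k).1 (τ k).2.1 (τ k).2.2 -
                  Qfun PT R γ π₁ π₂ (m+1) k (τ k).1 (τ k).2.1 (τ k).2.2) +
              cumRatio πb₁ π₁ πb₂ π₂ τ (k : ℕ) * Vfun PT R γ π₁ π₂ (m+1) k (τ k).1)
        = ∑ k : Fin (m+1), γ ^ (k : ℕ) *
            ∑ s : S, ∑ a : A₁, ∑ b : A₂, marg PI PT π₁ π₂ (k : ℕ) s a b * R s a b := by
          simp only [Finset.mul_sum]
          rw [Finset.sum_comm]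
          refine Finset.sum_congr rfl fun k _ => ?_
          have hA : ∑ τ : Fin (m+1) → S × A₁ × A₂, trajProb PI PT πb₁ πb₂ τ *
              (cumRatio πb₁ π₁ πb₂ π₂ τ ((k : ℕ) + 1) *
                (R (τ k).1 (τ k).2.1 (τ k).2.2 -
                  Qfun PT R γ π₁ π₂ (m+1) (k : ℕ) (τ k).1 (τ k).2.1 (τ k).2.2))
              = ∑ s : S, ∑ a : A₁, ∑ b : A₂, marg PI PT π₁ π₂ (k : ℕ) s a b *
                  (R s a b - Qfun PT R γ π₁ π₂ (m+1) (k : ℕ) s a b) := by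
            have h0 := ratio_master PI PT hPT1 π₁ hπ₁1 π₂ hπ₂1 πb₁ hb1 hπb₁1 πb₂ hb2 hπb₂1
              m (k : ℕ) k.isLt ((k : ℕ) + 1)
              (fun s a b => R s a b - Qfun PT R γ π₁ π₂ (m+1) (k : ℕ) s a b)
            rw [marg_congr PI PT (k : ℕ) _ π₁ _ π₂
              (fun j hj => funext fun s => funext fun a => if_pos (by omega))
              (fun j hj => funext fun s => funext fun b => if_pos (by omega))] at h0
            exact h0
          have hB : ∑ τ : Fin (m+1) → S × A₁ × A₂, trajProb PI PT πb₁ πb₂ τ *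
              (cumRatio πb₁ π₁ πb₂ π₂ τ (k : ℕ) * Vfun PT R γ π₁ π₂ (m+1) (k : ℕ) (τ k).1)
              = ∑ s : S, margC PI PT π₁ π₂ (k : ℕ) s * Vfun PT R γ π₁ π₂ (m+1) (k : ℕ) s := by
            have h0 := ratio_master PI PT hPT1 π₁ hπ₁1 π₂ hπ₂1 πb₁ hb1 hπb₁1 πb₂ hb2 hπb₂1
              m (k : ℕ) k.isLt (k : ℕ)
              (fun s _ _ => Vfun PT R γ π₁ π₂ (m+1) (k : ℕ) s)
            refine Eq.trans h0 ?_
            calc ∑ s : S, ∑ a : A₁, ∑ b : A₂,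
                  marg PI PT (fun j s a => if j < (k : ℕ) then π₁ j s a else πb₁ j s a)
                    (fun j s b => if j < (k : ℕ) then π₂ j s b else πb₂ j s b) (k : ℕ) s a b *
                    Vfun PT R γ π₁ π₂ (m+1) (k : ℕ) s
                = ∑ s : S, margC PI PT
                    (fun j s a => if j < (k : ℕ) then π₁ j s a else πb₁ j s a)
                    (fun j s b => if j < (k : ℕ) then π₂ j s b else πb₂ j s b) (k : ℕ) s *
                    Vfun PT R γ π₁ π₂ (m+1) (k : ℕ) s := by
                  refine Finset.sum_congr rfl fun s _ => ?_
                  exact sum_ab_marg _ _ _ _ _ _ (by simp [hπb₁1]) (by simp [hπb₂1]) _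
              _ = _ := by
                  rw [margC_congr PI PT (k : ℕ) _ π₁ _ π₂
                    (fun j hj => funext fun s => funext fun a => if_pos (by omega))
                    (fun j hj => funext fun s => funext fun b => if_pos (by omega))]
          have hQ : ∑ s : S, ∑ a : A₁, ∑ b : A₂, marg PI PT π₁ π₂ (k : ℕ) s a b *
                Qfun PT R γ π₁ π₂ (m+1) (k : ℕ) s a b
              = ∑ s : S, margC PI PT π₁ π₂ (k : ℕ) s *
                  Vfun PT R γ π₁ π₂ (m+1) (k : ℕ) s := by
            refine Finset.sum_congr rfl fun s _ => ?_
            calc ∑ a : A₁, ∑ b : A₂, marg PI PT π₁ π₂ (k : ℕ) s a b *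
                  Qfun PT R γ π₁ π₂ (m+1) (k : ℕ) s a b
                = margC PI PT π₁ π₂ (k : ℕ) s * ∑ a : A₁, ∑ b : A₂,
                    π₁ (k : ℕ) s a * π₂ (k : ℕ) s b *
                      Qfun PT R γ π₁ π₂ (m+1) (k : ℕ) s a b := by
                  rw [Finset.mul_sum]
                  refine Finset.sum_congr rfl fun a _ => ?_
                  rw [Finset.mul_sum]
                  refine Finset.sum_congr rfl fun b _ => ?_
                  rw [marg_factor]; ring
              _ = margC PI PT π₁ π₂ (k : ℕ) s * Vaux PT R γ π₁ π₂ (m+1) ((m+1) - (k : ℕ)) s := by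
                  rw [show (∑ a : A₁, ∑ b : A₂, π₁ (k : ℕ) s a * π₂ (k : ℕ) s b *
                      Qfun PT R γ π₁ π₂ (m+1) (k : ℕ) s a b)
                    = Vaux PT R γ π₁ π₂ (m+1) ((m+1) - (k : ℕ)) s from
                    QV PT R γ π₁ π₂ (m+1) (k : ℕ) k.isLt s]
              _ = margC PI PT π₁ π₂ (k : ℕ) s * Vfun PT R γ π₁ π₂ (m+1) (k : ℕ) s := rfl
          have hsplit : ∑ s : S, ∑ a : A₁, ∑ b : A₂, marg PI PT π₁ π₂ (k : ℕ) s a b *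
                (R s a b - Qfun PT R γ π₁ π₂ (m+1) (k : ℕ) s a b)
              = (∑ s : S, ∑ a : A₁, ∑ b : A₂, marg PI PT π₁ π₂ (k : ℕ) s a b * R s a b)
                - ∑ s : S, ∑ a : A₁, ∑ b : A₂, marg PI PT π₁ π₂ (k : ℕ) s a b *
                    Qfun PT R γ π₁ π₂ (m+1) (k : ℕ) s a b := by
            simp [mul_sub, Finset.sum_sub_distrib]
          calc ∑ τ : Fin (m+1) → S × A₁ × A₂, trajProb PI PT πb₁ πb₂ τ *
                (γ ^ (k : ℕ) *
                  (cumRatio πb₁ π₁ πb₂ π₂ τ ((k : ℕ) + 1) *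
                      (R (τ k).1 (τ k).2.1 (τ k).2.2 -
                        Qfun PT R γ π₁ π₂ (m+1) (k : ℕ) (τ k).1 (τ k).2.1 (τ k).2.2) +
                    cumRatio πb₁ π₁ πb₂ π₂ τ (k : ℕ) *
                      Vfun PT R γ π₁ π₂ (m+1) (k : ℕ) (τ k).1))
              = γ ^ (k : ℕ) * ((∑ τ : Fin (m+1) → S × A₁ × A₂, trajProb PI PT πb₁ πb₂ τ *
                    (cumRatio πb₁ π₁ πb₂ π₂ τ ((k : ℕ) + 1) *
                      (R (τ k).1 (τ k).2.1 (τ k).2.2 -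
                        Qfun PT R γ π₁ π₂ (m+1) (k : ℕ) (τ k).1 (τ k).2.1 (τ k).2.2)))
                  + ∑ τ : Fin (m+1) → S × A₁ × A₂, trajProb PI PT πb₁ πb₂ τ *
                      (cumRatio πb₁ π₁ πb₂ π₂ τ (k : ℕ) *
                        Vfun PT R γ π₁ π₂ (m+1) (k : ℕ) (τ k).1)) := by
                rw [mul_add, Finset.mul_sum, Finset.mul_sum, ← Finset.sum_add_distrib]
                exact Finset.sum_congr rfl fun τ _ => by ring
            _ = γ ^ (k : ℕ) * ((∑ s : S, ∑ a : A₁, ∑ b : A₂, marg PI PT π₁ π₂ (k : ℕ) s a b *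
                    (R s a b - Qfun PT R γ π₁ π₂ (m+1) (k : ℕ) s a b))
                  + ∑ s : S, margC PI PT π₁ π₂ (k : ℕ) s *
                      Vfun PT R γ π₁ π₂ (m+1) (k : ℕ) s) := by rw [hA, hB]
            _ = γ ^ (k : ℕ) * ∑ s : S, ∑ a : A₁, ∑ b : A₂,
                  marg PI PT π₁ π₂ (k : ℕ) s a b * R s a b := by
                rw [hsplit, hQ]; ring
            _ = ∑ s : S, γ ^ (k : ℕ) * ∑ a : A₁, ∑ b : A₂,
                  marg PI PT π₁ π₂ (k : ℕ) s a b * R s a b := by rw [Finset.mul_sum]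
            _ = _ := by simp only [Finset.mul_sum]
      _ = value (m+1) PI PT R γ π₁ π₂ :=
          (value_marg m PI PT hPT1 R γ π₁ π₂ hπ₁1 hπ₂1).symm
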